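/- arXiv:math/0508072 — 2 statements merged into one kernel-verified Lean document; each statement's English description precedes it below -/
import Mathlib

section
/- Let C̄ > 0, k ≥ 2 an integer, 0 ≤ r₀ < r₁ < ∞, and let β : [r₀, r₁] → (0,∞) be a non-decreasing function satisfying β(r₀) = r₀^k / (C̄^{k-1} k^k) and β(r) ≤ C̄ · (β'(r))^{k/(k-1)} for almost every r ∈ (r₀, r₁) (where β' denotes the derivative, which exists almost everywhere since β is monotone). Then β(r) ≥ r^k / (C̄^{k-1} k^k) for all r ∈ [r₀, r₁]. -/
/-! With `K = k C^((k-1)/k)`, raising the differential inequality to the power `(k-1)/k` gives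
`(β^(1/k))' ≥ 1/K` almost everywhere. For the monotone function `β^(1/k)` the integral of the
derivative is at most the increment, so `β(r)^(1/k) ≥ β(r₀)^(1/k) + (r - r₀)/K = r/K`. -/

open Set MeasureTheory

theorem MonotoneOn.mul_sub_le_sub_of_ae_le_deriv {f : ℝ → ℝ} {a b c : ℝ}
    (hf : MonotoneOn f (Icc a b)) (hab : a ≤ b)
    (h : ∀ᵐ x ∂volume, x ∈ Ioo a b → c ≤ deriv f x) :
    c * (b - a) ≤ f b - f a := by
  rw [← uIcc_of_le hab] at hf
  have hle : (fun _ ↦ c) ≤ᵐ[volume.restrict (Icc a b)] deriv f := by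
    rw [← restrict_Ioo_eq_restrict_Icc, Filter.EventuallyLE, ae_restrict_iff' measurableSet_Ioo]
    exact h
  calc c * (b - a) = ∫ _ in a..b, c := by simp [mul_comm]
    _ ≤ ∫ x in a..b, deriv f x :=
      intervalIntegral.integral_mono_ae_restrict hab intervalIntegrable_const
        hf.intervalIntegrable_deriv hle
    _ ≤ f b - f a := by
      have := hf.intervalIntegral_deriv_mem_uIcc
      rw [uIcc_of_le (sub_nonneg.2 (hf (by simp) (by simp [hab]) hab))] at this
      exact this.2

theorem MonotoneOn.deriv_nonneg_of_mem_interior {f : ℝ → ℝ} {s : Set ℝ} {x : ℝ}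
    (hf : MonotoneOn f s) (hx : x ∈ interior s) : 0 ≤ deriv f x := by
  rw [← derivWithin_of_mem_nhds (mem_interior_iff_mem_nhds.1 hx)]
  exact hf.derivWithin_nonneg

theorem inv_le_deriv_rpow_inv_of_le_mul_deriv_rpow {β : ℝ → ℝ} {C p x : ℝ} (hC : 0 < C)
    (hp : 1 < p) (hβ : 0 < β x) (hd : DifferentiableAt ℝ β x) (hd0 : 0 ≤ deriv β x)
    (h : β x ≤ C * deriv β x ^ (p / (p - 1))) :
    (p * C ^ ((p - 1) / p))⁻¹ ≤ deriv (fun y ↦ β y ^ p⁻¹) x := by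
  set q := (p - 1) / p
  have hp0 : 0 < p := by linarith
  have hq : 0 < q := div_pos (by linarith) hp0
  have hβq_le : β x ^ q ≤ C ^ q * deriv β x := by
    have := Real.rpow_le_rpow hβ.le h hq.le
    have hpq : p / (p - 1) * q = 1 := by
      simp only [q]
      field_simp [(by linarith : p - 1 ≠ 0)]
    rwa [Real.mul_rpow hC.le (by positivity), ← Real.rpow_mul hd0, hpq, Real.rpow_one] at this
  have hexp : β x ^ (p⁻¹ - 1) = (β x ^ q)⁻¹ := by
    rw [← Real.rpow_neg hβ.le]
    congr 1
    simp only [q]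
    field_simp
    ring
  rw [(hd.hasDerivAt.rpow_const (Or.inl hβ.ne')).deriv, hexp]
  have hβq : 0 < β x ^ q := Real.rpow_pos_of_pos hβ q
  have hCq : 0 < C ^ q := Real.rpow_pos_of_pos hC q
  calc (p * C ^ q)⁻¹ = β x ^ q / C ^ q * p⁻¹ * (β x ^ q)⁻¹ := by field_simp
    _ ≤ deriv β x * p⁻¹ * (β x ^ q)⁻¹ := by
      gcongr
      rwa [div_le_iff₀ hCq, mul_comm]

theorem natCast_mul_rpow_pow {C : ℝ} (hC : 0 ≤ C) {k : ℕ} (hk : 1 ≤ k) :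
    ((k : ℝ) * C ^ (((k : ℝ) - 1) / k)) ^ k = C ^ (k - 1) * (k : ℝ) ^ k := by
  rw [mul_pow, mul_comm, ← Real.rpow_natCast (C ^ _), ← Real.rpow_mul hC,
    div_mul_cancel₀ _ (by positivity), ← Nat.cast_one, ← Nat.cast_sub hk, Real.rpow_natCast]

theorem stmt_0_general (C : ℝ) (hC : 0 < C) (k : ℕ) (hk : 2 ≤ k) (r₀ r₁ : ℝ)
    (hr₀ : 0 ≤ r₀) (β : ℝ → ℝ)
    (hmono : MonotoneOn β (Set.Icc r₀ r₁))
    (hpos : ∀ r ∈ Set.Icc r₀ r₁, 0 < β r)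
    (hinit : β r₀ = r₀ ^ k / (C ^ (k - 1) * (k : ℝ) ^ k))
    (hdiff : ∀ᵐ r ∂volume, r ∈ Set.Ioo r₀ r₁ → DifferentiableAt ℝ β r)
    (hineq : ∀ᵐ r ∂volume, r ∈ Set.Ioo r₀ r₁ →
      β r ≤ C * (deriv β r) ^ ((k : ℝ) / ((k : ℝ) - 1))) :
    ∀ r ∈ Set.Icc r₀ r₁, r ^ k / (C ^ (k - 1) * (k : ℝ) ^ k) ≤ β r := by
  intro r hr
  have hk0 : k ≠ 0 := by omega
  set K := (k : ℝ) * C ^ (((k : ℝ) - 1) / k)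
  have hK : 0 < K := by positivity
  have hscale : ∀ s, s ^ k / (C ^ (k - 1) * (k : ℝ) ^ k) = (s / K) ^ k := fun s ↦ by
    rw [div_pow, natCast_mul_rpow_pow hC.le (by omega)]
  set G := fun y ↦ β y ^ (k : ℝ)⁻¹
  have hG : MonotoneOn G (Icc r₀ r) := fun x hx y hy hxy ↦
    Real.rpow_le_rpow (hpos x ⟨hx.1, hx.2.trans hr.2⟩).le
      (hmono ⟨hx.1, hx.2.trans hr.2⟩ ⟨hy.1, hy.2.trans hr.2⟩ hxy) (by positivity)
  have hG' : ∀ᵐ x ∂volume, x ∈ Ioo r₀ r → K⁻¹ ≤ deriv G x := by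
    filter_upwards [hdiff, hineq] with x hdx hx hxr
    have hx₁ : x ∈ Ioo r₀ r₁ := ⟨hxr.1, hxr.2.trans_le hr.2⟩
    exact inv_le_deriv_rpow_inv_of_le_mul_deriv_rpow hC (by exact_mod_cast hk)
      (hpos x (Ioo_subset_Icc_self hx₁)) (hdx hx₁)
      (hmono.deriv_nonneg_of_mem_interior (by rwa [interior_Icc])) (hx hx₁)
  have hGr₀ : G r₀ = r₀ / K := by
    simp only [G, hinit, hscale, Real.pow_rpow_inv_natCast (div_nonneg hr₀ hK.le) hk0]
  have hGr : r / K ≤ G r := by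
    have hlin := hG.mul_sub_le_sub_of_ae_le_deriv hr.1 hG'
    rw [hGr₀] at hlin
    calc r / K = r₀ / K + K⁻¹ * (r - r₀) := by field_simp; ring
      _ ≤ G r := by linarith
  calc r ^ k / (C ^ (k - 1) * (k : ℝ) ^ k) = (r / K) ^ k := hscale r
    _ ≤ G r ^ k := pow_le_pow_left₀ (div_nonneg (hr₀.trans hr.1) hK.le) hGr k
    _ = β r := Real.rpow_inv_natCast_pow (hpos r hr).le hk0

theorem stmt_0 (C : ℝ) (hC : 0 < C) (k : ℕ) (hk : 2 ≤ k) (r₀ r₁ : ℝ)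
    (hr₀ : 0 ≤ r₀) (hr : r₀ < r₁) (β : ℝ → ℝ)
    (hmono : MonotoneOn β (Set.Icc r₀ r₁))
    (hpos : ∀ r ∈ Set.Icc r₀ r₁, 0 < β r)
    (hinit : β r₀ = r₀ ^ k / (C ^ (k - 1) * (k : ℝ) ^ k))
    (hdiff : ∀ᵐ r ∂volume, r ∈ Set.Ioo r₀ r₁ → DifferentiableAt ℝ β r)
    (hineq : ∀ᵐ r ∂volume, r ∈ Set.Ioo r₀ r₁ →
      β r ≤ C * (deriv β r) ^ ((k : ℝ) / ((k : ℝ) - 1))) :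
    ∀ r ∈ Set.Icc r₀ r₁, r ^ k / (C ^ (k - 1) * (k : ℝ) ^ k) ≤ β r :=
  stmt_0_general C hC k hk r₀ r₁ hr₀ β hmono hpos hinit hdiff hineq
end

section
/- Vitali-type partial covering lemma: Let (Y,d) be a metric space, μ a finite Borel measure on Y, F > 0 a constant, and k a positive integer. Suppose r₀ : Y → [0,∞) is a function such that for μ-almost every y ∈ Y: r₀(y) > 0, μ(B(y, r₀(y))) = F·r₀(y)^k, and μ(B(y, 5·r₀(y))) < 5^k·F·r₀(y)^k. Then there exist finitely many points y₁, …, y_N ∈ Y with r₀(y_i) > 0, such that the closed balls B(y_i, 2·r₀(y_i)) are pairwise disjoint, and Σ_{i=1}^N μ(B(y_i, r₀(y_i))) ≥ μ(Y)/5^k. -/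
open Set Metric MeasureTheory
open scoped ENNReal

/-! The good points carry almost all of `μ`, and on them `F r₀ ^ k ≤ μ Y` bounds the radii, so the
Vitali covering lemma selects disjoint balls `B(y, 2 r₀ y)` whose enlargements `B(y, 5 r₀ y)` cover
the good points. Hence `μ Y ≤ ∑ μ B(y, 5 r₀ y) < 5 ^ k ∑ μ B(y, r₀ y)`, and since the inequality is
strict, a finite partial sum already exceeds `μ Y / 5 ^ k`. -/

theorem Set.PairwiseDisjoint.countable_of_measure_pos {ι α : Type*} [MeasurableSpace α]
    {μ : Measure α} [SFinite μ] {u : Set ι} {B : ι → Set α}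
    (hB : ∀ i ∈ u, NullMeasurableSet (B i) μ) (hd : u.PairwiseDisjoint B)
    (hpos : ∀ i ∈ u, 0 < μ (B i)) : u.Countable := by
  have h := Measure.countable_meas_pos_of_disjoint_iUnion₀ (μ := μ) (As := fun i : u => B i)
    (fun i => hB i i.2) (pairwise_subtype_iff_pairwise_set u _ |>.2 hd |>.mono
      fun _ _ h => Disjoint.aedisjoint h)
  rw [show {i : u | 0 < μ (B i)} = univ from eq_univ_of_forall fun i => hpos i i.2,
    countable_univ_iff] at h
  exact countable_coe_iff.1 h

theorem ENNReal.exists_finset_subset_lt_sum_of_lt_tsum {α : Type*} {u : Set α} {f : α → ℝ≥0∞}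
    {a : ℝ≥0∞} (h : a < ∑' x : u, f x) : ∃ t : Finset α, ↑t ⊆ u ∧ a < ∑ x ∈ t, f x := by
  rw [ENNReal.tsum_eq_iSup_sum, lt_iSup_iff] at h
  obtain ⟨t, ht⟩ := h
  refine ⟨t.map (Function.Embedding.subtype _), ?_, by rwa [Finset.sum_map]⟩
  simp

theorem le_max_one_div_of_mul_pow_le {F M r : ℝ} {k : ℕ} (hF : 0 < F) (hk : 1 ≤ k)
    (h : F * r ^ k ≤ M) : r ≤ max 1 (M / F) := by
  rcases le_or_gt r 1 with hr | hr
  · exact hr.trans (le_max_left _ _)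
  · calc r ≤ r ^ k := le_self_pow₀ hr.le (by omega)
      _ ≤ M / F := by rw [le_div_iff₀ hF, mul_comm]; exact h
      _ ≤ _ := le_max_right _ _

section Vitali

variable {Y : Type*} [PseudoMetricSpace Y] {s : Set Y} {r : Y → ℝ} {R : ℝ}

theorem exists_pairwiseDisjoint_closedBall_two_mul_subset_biUnion_five_mul
    (hr : ∀ y ∈ s, 0 ≤ r y) (hR : ∀ y ∈ s, r y ≤ R) :
    ∃ u ⊆ s, u.PairwiseDisjoint (fun y => closedBall y (2 * r y)) ∧
      s ⊆ ⋃ b ∈ u, closedBall b (5 * r b) := by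
  -- Meeting balls with `r a ≤ 3/2 * r b` give `dist a b ≤ 2 * r a + 2 * r b ≤ 5 * r b`.
  obtain ⟨u, hus, hdisj, hcover⟩ := Vitali.exists_disjoint_subfamily_covering_enlargement
    (fun y => closedBall y (2 * r y)) s r (3 / 2) (by norm_num) hr R hR
    fun y hy => nonempty_closedBall.2 (by linarith [hr y hy])
  refine ⟨u, hus, hdisj, fun a ha => ?_⟩
  obtain ⟨b, hbu, ⟨z, hza, hzb⟩, hab⟩ := hcover a ha
  refine mem_biUnion hbu (mem_closedBall.2 ?_)
  rw [mem_closedBall] at hza hzb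
  linarith [dist_triangle_left a b z]

variable [MeasurableSpace Y] [OpensMeasurableSpace Y]

theorem exists_finset_pairwiseDisjoint_closedBall_two_mul_measure_div_le_sum
    (μ : Measure Y) [IsFiniteMeasure μ] {C : ℝ≥0∞} (hC : C ≠ ∞)
    (hr : ∀ y ∈ s, 0 ≤ r y) (hR : ∀ y ∈ s, r y ≤ R)
    (hμ : ∀ y ∈ s, μ (closedBall y (5 * r y)) < C * μ (closedBall y (r y))) :
    ∃ t : Finset Y, ↑t ⊆ s ∧ (t : Set Y).PairwiseDisjoint (fun y => closedBall y (2 * r y)) ∧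
      μ s / C ≤ ∑ y ∈ t, μ (closedBall y (r y)) := by
  rcases s.eq_empty_or_nonempty with rfl | ⟨a, ha⟩
  · exact ⟨∅, by simp⟩
  obtain ⟨u, hus, hdisj, hcover⟩ :=
    exists_pairwiseDisjoint_closedBall_two_mul_subset_biUnion_five_mul hr hR
  have hball_le : ∀ b ∈ u, closedBall b (r b) ⊆ closedBall b (2 * r b) := fun b hb =>
    closedBall_subset_closedBall (by linarith [hr b (hus hb)])
  have hball_pos : ∀ y ∈ s, 0 < μ (closedBall y (r y)) := fun y hy =>
    pos_iff_ne_zero.2 fun h0 => by simpa [h0] using hμ y hy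
  have hu : u.Countable := hdisj.countable_of_measure_pos
    (fun _ _ => measurableSet_closedBall.nullMeasurableSet) fun b hb =>
      (hball_pos b (hus hb)).trans_le (measure_mono (hball_le b hb))
  have hsum_ne_top : ∑' b : u, μ (closedBall b (r b)) ≠ ∞ := by
    refine ne_top_of_le_ne_top (measure_ne_top μ univ) ?_
    calc ∑' b : u, μ (closedBall b (r b)) ≤ ∑' b : u, μ (closedBall b (2 * r b)) :=
          ENNReal.tsum_le_tsum fun b => measure_mono (hball_le b b.2)
      _ ≤ μ univ := tsum_measure_le_measure_univ
          (fun _ => measurableSet_closedBall.nullMeasurableSet)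
          (pairwise_subtype_iff_pairwise_set u _ |>.2 hdisj |>.mono
            fun _ _ h => Disjoint.aedisjoint h)
  obtain ⟨b₀, hb₀, -⟩ := mem_iUnion₂.1 (hcover ha)
  have hlt : μ s < C * ∑' b : u, μ (closedBall b (r b)) := calc
    μ s ≤ μ (⋃ b ∈ u, closedBall b (5 * r b)) := measure_mono hcover
    _ ≤ ∑' b : u, μ (closedBall b (5 * r b)) := measure_biUnion_le μ hu _
    _ < ∑' b : u, C * μ (closedBall b (r b)) := by
      refine ENNReal.tsum_lt_tsum (i := ⟨b₀, hb₀⟩) ?_ (fun b => (hμ b (hus b.2)).le)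
        (hμ b₀ (hus hb₀))
      refine ne_top_of_le_ne_top ?_ (ENNReal.tsum_le_tsum fun b => (hμ b (hus b.2)).le)
      rw [ENNReal.tsum_mul_left]
      exact ENNReal.mul_ne_top hC hsum_ne_top
    _ = C * ∑' b : u, μ (closedBall b (r b)) := ENNReal.tsum_mul_left
  obtain ⟨t, htu, hts⟩ :=
    ENNReal.exists_finset_subset_lt_sum_of_lt_tsum (f := fun y => μ (closedBall y (r y)))
      (ENNReal.div_lt_of_lt_mul' hlt)
  exact ⟨t, htu.trans hus, hdisj.subset htu, hts.le⟩

end Vitali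

theorem stmt_4 {Y : Type*} [MetricSpace Y] [MeasurableSpace Y] [BorelSpace Y]
    (μ : Measure Y) [IsFiniteMeasure μ]
    (F : ℝ) (hF : 0 < F) (k : ℕ) (hk : 1 ≤ k) (r₀ : Y → ℝ)
    (h : ∀ᵐ y ∂μ, 0 < r₀ y ∧
      μ (Metric.closedBall y (r₀ y)) = ENNReal.ofReal (F * r₀ y ^ k) ∧
      μ (Metric.closedBall y (5 * r₀ y)) < ENNReal.ofReal (5 ^ k * F * r₀ y ^ k)) :
    ∃ (N : ℕ) (y : Fin N → Y), (∀ i, 0 < r₀ (y i)) ∧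
      (∀ i j, i ≠ j → Disjoint (Metric.closedBall (y i) (2 * r₀ (y i)))
        (Metric.closedBall (y j) (2 * r₀ (y j)))) ∧
      μ Set.univ / 5 ^ k ≤ ∑ i, μ (Metric.closedBall (y i) (r₀ (y i))) := by
  set G : Set Y := {y | 0 < r₀ y ∧
      μ (closedBall y (r₀ y)) = ENNReal.ofReal (F * r₀ y ^ k) ∧
      μ (closedBall y (5 * r₀ y)) < ENNReal.ofReal (5 ^ k * F * r₀ y ^ k)}
  have hG : μ G = μ univ := measure_congr (ae_eq_univ.2 h)
  have hradius : ∀ y ∈ G, r₀ y ≤ max 1 ((μ univ).toReal / F) := fun y hy =>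
    le_max_one_div_of_mul_pow_le hF hk <| (ENNReal.ofReal_le_iff_le_toReal (measure_ne_top μ _)).1
      (hy.2.1 ▸ measure_mono (subset_univ _))
  have hdoubling : ∀ y ∈ G, μ (closedBall y (5 * r₀ y)) < 5 ^ k * μ (closedBall y (r₀ y)) := by
    rintro y ⟨-, hball, hball_five⟩
    rwa [hball, ← ENNReal.ofReal_ofNat, ← ENNReal.ofReal_pow (by norm_num),
      ← ENNReal.ofReal_mul (by positivity), ← mul_assoc]
  obtain ⟨t, htG, hdisj, hsum⟩ :=
    exists_finset_pairwiseDisjoint_closedBall_two_mul_measure_div_le_sum μ (by simp)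
      (fun y hy => hy.1.le) hradius hdoubling
  let e := t.equivFin.symm
  refine ⟨t.card, fun i => e i, fun i => (htG (e i).2).1,
    fun i j hij => hdisj (e i).2 (e j).2 fun he => hij (e.injective (Subtype.ext he)), ?_⟩
  rw [← hG]
  exact hsum.trans_eq ((Finset.sum_coe_sort t _).symm.trans (e.sum_comp _).symm)
end
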